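/- For every $\xi \in \mathbb{R}$, the function $\gamma \mapsto \mathcal{I}(\xi, \gamma) = \dfrac{4\big[3 + \gamma(2\sqrt{3} + \gamma - \xi\gamma)\big]}{3(2+\gamma^2)}$ on $[0, \infty)$ attains a global maximum at the unique point $\gamma_+(\xi) = \dfrac{\sqrt{4\xi^2 + 4\xi + 25} - 2\xi - 1}{2\sqrt{3}}$ (which is strictly positive), and the maximum value is $\mathcal{I}_{\max}(\xi) = \tfrac{1}{3}\big[5 - 2\xi + \sqrt{25 + 4\xi(\xi+1)}\big]$. In particular, for $\xi = (\sqrt{3}-1)/2$ one has $\gamma_+(\xi) = 1$ and $\mathcal{I}_{\max}(\xi) = 2 + \tfrac{2\sqrt{3}}{3}$, and for $\xi = 1$ one has $\gamma_+(1) = (\sqrt{11}-\sqrt{3})/2$. -/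
import Mathlib


/-- The value of the Bell expression `I₃(ξ)` on the partially entangled two-qutrit
state `|ψ_γ⟩` with the optimal CGLMP measurements. -/
noncomputable def Ical (ξ γ : ℝ) : ℝ :=
  4 * (3 + γ * (2 * Real.sqrt 3 + γ - ξ * γ)) / (3 * (2 + γ ^ 2))

/-- The optimal state parameter for the Bell inequality `I₃(ξ)`. -/
noncomputable def gammaPlus (ξ : ℝ) : ℝ :=
  (Real.sqrt (4 * ξ ^ 2 + 4 * ξ + 25) - 2 * ξ - 1) / (2 * Real.sqrt 3)

/-- The conjectured maximal quantum violation of `I₃(ξ)`. -/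
noncomputable def Imax (ξ : ℝ) : ℝ :=
  (5 - 2 * ξ + Real.sqrt (25 + 4 * ξ * (ξ + 1))) / 3

section Aux

variable (ξ : ℝ)

lemma hr2 : (Real.sqrt 3) ^ 2 = 3 := Real.sq_sqrt (by norm_num)

lemma hr0 : (0:ℝ) < Real.sqrt 3 := Real.sqrt_pos.mpr (by norm_num)

lemma hs2 : (Real.sqrt (4 * ξ ^ 2 + 4 * ξ + 25)) ^ 2 = 4 * ξ ^ 2 + 4 * ξ + 25 :=
  Real.sq_sqrt (by nlinarith [sq_nonneg (2 * ξ + 1)])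

lemma hs0 : (0:ℝ) ≤ Real.sqrt (4 * ξ ^ 2 + 4 * ξ + 25) := Real.sqrt_nonneg _

lemma hA : 0 < Real.sqrt (4 * ξ ^ 2 + 4 * ξ + 25) + 2 * ξ + 1 := by
  nlinarith [hs2 ξ, hs0 ξ, sq_nonneg (Real.sqrt (4 * ξ ^ 2 + 4 * ξ + 25) + 2 * ξ + 1)]

lemma hB : 0 < Real.sqrt (4 * ξ ^ 2 + 4 * ξ + 25) - 2 * ξ - 1 := by
  nlinarith [hs2 ξ, hs0 ξ, sq_nonneg (Real.sqrt (4 * ξ ^ 2 + 4 * ξ + 25) - 2 * ξ - 1)]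

lemma gammaPlus_pos : 0 < gammaPlus ξ :=
  div_pos (hB ξ) (by positivity)

/-- The key quadratic is nonnegative. -/
lemma hQ (γ : ℝ) :
    0 ≤ (Real.sqrt (4 * ξ ^ 2 + 4 * ξ + 25) + 2 * ξ + 1) * γ ^ 2
        - 8 * Real.sqrt 3 * γ
        + 2 * (Real.sqrt (4 * ξ ^ 2 + 4 * ξ + 25) - 2 * ξ - 1) := by
  set s := Real.sqrt (4 * ξ ^ 2 + 4 * ξ + 25)
  nlinarith [sq_nonneg ((s + 2 * ξ + 1) * γ - 4 * Real.sqrt 3), hA ξ, hs2 ξ, hr2]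

lemma imax_sqrt : Real.sqrt (25 + 4 * ξ * (ξ + 1)) = Real.sqrt (4 * ξ ^ 2 + 4 * ξ + 25) := by
  ring_nf

lemma Ical_le_Imax (γ : ℝ) : Ical ξ γ ≤ Imax ξ := by
  unfold Ical Imax
  rw [imax_sqrt]
  rw [div_le_div_iff₀ (by positivity) (by norm_num)]
  nlinarith [hQ ξ γ]

lemma h2rg : 2 * Real.sqrt 3 * gammaPlus ξ = Real.sqrt (4 * ξ ^ 2 + 4 * ξ + 25) - 2 * ξ - 1 := by
  unfold gammaPlus
  rw [mul_comm]
  exact div_mul_cancel₀ _ (by positivity)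

lemma hAg : (Real.sqrt (4 * ξ ^ 2 + 4 * ξ + 25) + 2 * ξ + 1) * gammaPlus ξ = 4 * Real.sqrt 3 := by
  unfold gammaPlus
  rw [← mul_div_assoc, div_eq_iff (by positivity : (2 * Real.sqrt 3) ≠ 0)]
  linear_combination hs2 ξ - 8 * hr2

lemma Ical_gammaPlus : Ical ξ (gammaPlus ξ) = Imax ξ := by
  unfold Ical Imax
  rw [imax_sqrt]
  rw [div_eq_div_iff (by positivity) (by norm_num)]
  linear_combination (-3 * gammaPlus ξ) * hAg ξ + 6 * h2rg ξ

/-- From equality `Ical = Imax` at a point, deduce the point is `gammaPlus`. -/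
lemma eq_gammaPlus_of_Ical_eq (γ : ℝ) (h : Ical ξ γ = Imax ξ) : γ = gammaPlus ξ := by
  unfold Ical Imax at h
  rw [imax_sqrt] at h
  set s := Real.sqrt (4 * ξ ^ 2 + 4 * ξ + 25) with hs
  set r := Real.sqrt 3 with hr
  have h2 : r ^ 2 = 3 := hr2
  have h3 : s ^ 2 = 4 * ξ ^ 2 + 4 * ξ + 25 := hs2 ξ
  rw [div_eq_div_iff (by positivity) (by norm_num)] at h
  have hQ0 : (s + 2 * ξ + 1) * γ ^ 2 - 8 * r * γ + 2 * (s - 2 * ξ - 1) = 0 := by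
    linear_combination (-1/3) * h
  have hsq : ((s + 2 * ξ + 1) * γ - 4 * r) ^ 2 = 0 := by
    linear_combination (s + 2 * ξ + 1) * hQ0 - 2 * h3 + 16 * h2
  have h4 : (s + 2 * ξ + 1) * γ - 4 * r = 0 := by
    exact pow_eq_zero_iff (n := 2) (by norm_num) |>.mp hsq
  apply mul_left_cancel₀ (hA ξ).ne'
  rw [hAg ξ]
  linarith [h4]

end Aux

/-- For every `ξ`, the map `γ ↦ 𝓘(ξ, γ)` on `[0, ∞)` attains its global maximum at the
unique, strictly positive point `γ₊(ξ) = (√(4ξ²+4ξ+25) - 2ξ - 1)/(2√3)`, with maximum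
value `𝓘_max(ξ) = [5 - 2ξ + √(25 + 4ξ(ξ+1))]/3`. In particular `γ₊((√3-1)/2) = 1` with
`𝓘_max((√3-1)/2) = 2 + 2√3/3`, and `γ₊(1) = (√11 - √3)/2`. -/
theorem cglmp_family_optimal_gamma :
    (∀ ξ : ℝ,
      0 < gammaPlus ξ ∧
      (∀ γ ∈ Set.Ici (0 : ℝ), Ical ξ γ ≤ Ical ξ (gammaPlus ξ)) ∧
      (∀ γ ∈ Set.Ici (0 : ℝ),
        (∀ γ' ∈ Set.Ici (0 : ℝ), Ical ξ γ' ≤ Ical ξ γ) → γ = gammaPlus ξ) ∧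
      Ical ξ (gammaPlus ξ) = Imax ξ) ∧
    gammaPlus ((Real.sqrt 3 - 1) / 2) = 1 ∧
    Imax ((Real.sqrt 3 - 1) / 2) = 2 + 2 * Real.sqrt 3 / 3 ∧
    gammaPlus 1 = (Real.sqrt 11 - Real.sqrt 3) / 2 := by
  have h2 : (Real.sqrt 3) ^ 2 = 3 := hr2
  refine ⟨fun ξ => ⟨gammaPlus_pos ξ, ?_, ?_, Ical_gammaPlus ξ⟩, ?_, ?_, ?_⟩
  · intro γ _
    rw [Ical_gammaPlus ξ]
    exact Ical_le_Imax ξ γ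
  · intro γ hγ hmax
    apply eq_gammaPlus_of_Ical_eq
    refine le_antisymm (Ical_le_Imax ξ γ) ?_
    have := hmax (gammaPlus ξ) (le_of_lt (gammaPlus_pos ξ))
    rwa [Ical_gammaPlus ξ] at this
  · unfold gammaPlus
    have harg : 4 * ((Real.sqrt 3 - 1) / 2) ^ 2 + 4 * ((Real.sqrt 3 - 1) / 2) + 25 = 27 := by
      linear_combination h2
    rw [harg, show (27:ℝ) = 3 ^ 2 * 3 by norm_num,
      Real.sqrt_mul (by positivity), Real.sqrt_sq (by norm_num)]
    rw [div_eq_one_iff_eq (by positivity)]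
    ring
  · unfold Imax
    have harg : 25 + 4 * ((Real.sqrt 3 - 1) / 2) * ((Real.sqrt 3 - 1) / 2 + 1) = 27 := by
      linear_combination h2
    rw [harg, show (27:ℝ) = 3 ^ 2 * 3 by norm_num,
      Real.sqrt_mul (by positivity), Real.sqrt_sq (by norm_num)]
    ring
  · unfold gammaPlus
    have harg : 4 * (1:ℝ) ^ 2 + 4 * 1 + 25 = 11 * 3 := by norm_num
    rw [harg, Real.sqrt_mul (by norm_num)]
    rw [div_eq_div_iff (by positivity) (by norm_num)]
    linear_combination 2 * h2
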